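/- Let X_1,...,X_L be independent real random variables with E[X_i] = 0 and |X_i| ≤ M for all i, and let S_ℓ := X_1 + ... + X_ℓ. Then for every t > 0, P[max_{1 ≤ ℓ ≤ L} S_ℓ ≥ t] ≤ exp(−(t²/2)/(Σ_{i=1}^L E[X_i²] + Mt/3)). -/

import Mathlib

/-!
Exponential moment method combined with Doob's maximal inequality. For `θ ≥ 0` the process
`exp (θ S_ℓ)` is a nonnegative submartingale for the filtration of the first `ℓ` variables, so
`P[max_ℓ S_ℓ ≥ t] ≤ exp (-θ t) E[exp (θ S_L)]`. By independence `E[exp (θ S_L)]` is the product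
of the `E[exp (θ X_i)]`, and `exp u ≤ 1 + u + u² / (2 (1 - b / 3))` for `u ≤ b < 3` (comparing
the exponential series with a geometric one) bounds each factor by
`exp (θ² E[X_i²] / (2 (1 - θ M / 3)))`. The choice `θ = t / (Σ E[X_i²] + M t / 3)` gives the
claimed exponent.
-/

open MeasureTheory ProbabilityTheory Real Finset

lemma two_mul_three_pow_le_factorial (n : ℕ) : 2 * 3 ^ n ≤ (n + 2).factorial := by
  induction n with
  | zero => simp [Nat.factorial]
  | succ n ih =>
    calc 2 * 3 ^ (n + 1) = 3 * (2 * 3 ^ n) := by ring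
    _ ≤ (n + 3) * (n + 2).factorial := Nat.mul_le_mul (by omega) ih
    _ = (n + 3).factorial := rfl

lemma exp_le_one_add_add_sq_div_of_nonpos {u : ℝ} (hu : u ≤ 0) :
    exp u ≤ 1 + u + u ^ 2 / 2 := by
  have hderiv (x : ℝ) :
      HasDerivAt (fun y ↦ 1 + y + y ^ 2 / 2 - exp y) (1 + x - exp x) x := by
    have h : HasDerivAt (fun y ↦ 1 + y + y ^ 2 / 2 - exp y)
        (1 + (2 : ℕ) * x ^ (2 - 1) / 2 - exp x) x :=
      (((hasDerivAt_id' x).const_add 1).add ((hasDerivAt_pow 2 x).div_const 2)).sub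
        (hasDerivAt_exp x)
    convert h using 1
    norm_num
  have hanti : Antitone (fun y ↦ 1 + y + y ^ 2 / 2 - exp y) :=
    antitone_of_deriv_nonpos (fun x ↦ (hderiv x).differentiableAt) fun x ↦ by
      rw [(hderiv x).deriv]
      linarith [add_one_le_exp x]
  simpa using hanti hu

/-- The tail of the exponential series is dominated by a geometric series of ratio `u / 3`. -/
lemma exp_le_one_add_add_sq_div_of_lt_three {u : ℝ} (h0 : 0 ≤ u) (h3 : u < 3) :
    exp u ≤ 1 + u + u ^ 2 / (2 * (1 - u / 3)) := by
  have hr : u / 3 < 1 := by linarith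
  have hsum := summable_pow_div_factorial u
  have hterm (n : ℕ) : u ^ (n + 2) / (n + 2).factorial ≤ u ^ 2 / 2 * (u / 3) ^ n := by
    have hfac : (2 * 3 ^ n : ℝ) ≤ (n + 2).factorial := by
      exact_mod_cast two_mul_three_pow_le_factorial n
    calc u ^ (n + 2) / (n + 2).factorial ≤ u ^ (n + 2) / (2 * 3 ^ n) := by gcongr
    _ = u ^ 2 / 2 * (u / 3) ^ n := by rw [div_pow, pow_add]; ring
  have htail : ∑' n : ℕ, u ^ (n + 2) / (n + 2).factorial ≤ u ^ 2 / (2 * (1 - u / 3)) :=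
    calc ∑' n : ℕ, u ^ (n + 2) / (n + 2).factorial ≤ ∑' n : ℕ, u ^ 2 / 2 * (u / 3) ^ n :=
          Summable.tsum_le_tsum hterm ((summable_nat_add_iff 2).mpr hsum)
            ((summable_geometric_of_lt_one (by positivity) hr).mul_left _)
    _ = u ^ 2 / (2 * (1 - u / 3)) := by
        rw [tsum_mul_left, tsum_geometric_of_lt_one (by positivity) hr]; field_simp
  rw [exp_eq_exp_ℝ, NormedSpace.exp_eq_tsum_div]
  beta_reduce
  rw [← hsum.sum_add_tsum_nat_add 2]
  simpa [Finset.sum_range_succ] using htail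

lemma exp_le_one_add_add_sq_div_of_le {u b : ℝ} (hb0 : 0 ≤ b) (hb3 : b < 3) (hub : u ≤ b) :
    exp u ≤ 1 + u + u ^ 2 / (2 * (1 - b / 3)) := by
  rcases le_or_gt u 0 with hu | hu
  · calc exp u ≤ 1 + u + u ^ 2 / 2 := exp_le_one_add_add_sq_div_of_nonpos hu
    _ ≤ 1 + u + u ^ 2 / (2 * (1 - b / 3)) := by
        gcongr <;> linarith
  · calc exp u ≤ 1 + u + u ^ 2 / (2 * (1 - u / 3)) :=
          exp_le_one_add_add_sq_div_of_lt_three hu.le (hub.trans_lt hb3)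
    _ ≤ 1 + u + u ^ 2 / (2 * (1 - b / 3)) := by
        gcongr
        linarith

section BoundedVariable

variable {Ω : Type*} {mΩ : MeasurableSpace Ω} {μ : Measure Ω} {X : Ω → ℝ} {M : ℝ}

lemma integrable_sq_of_abs_le [IsFiniteMeasure μ] (hX : AEStronglyMeasurable X μ)
    (hbdd : ∀ᵐ ω ∂μ, |X ω| ≤ M) : Integrable (fun ω ↦ X ω ^ 2) μ :=
  .of_bound (hX.pow 2) (M ^ 2) <| hbdd.mono fun ω hω ↦ by
    rw [norm_pow, Real.norm_eq_abs]
    exact pow_le_pow_left₀ (abs_nonneg _) hω 2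

lemma integrable_exp_mul_of_abs_le [IsFiniteMeasure μ] (hX : AEStronglyMeasurable X μ)
    (hbdd : ∀ᵐ ω ∂μ, |X ω| ≤ M) (θ : ℝ) : Integrable (fun ω ↦ exp (θ * X ω)) μ :=
  .of_bound (continuous_exp.comp_aestronglyMeasurable (hX.const_mul θ)) (exp (|θ| * M)) <|
    hbdd.mono fun ω hω ↦ by
      rw [Real.norm_eq_abs, abs_exp, exp_le_exp]
      calc θ * X ω ≤ |θ| * |X ω| := by rw [← abs_mul]; exact le_abs_self _
      _ ≤ |θ| * M := by gcongr

lemma ae_eq_zero_of_integral_sq_eq_zero (hsq : Integrable (fun ω ↦ X ω ^ 2) μ)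
    (h : ∫ ω, X ω ^ 2 ∂μ = 0) : ∀ᵐ ω ∂μ, X ω = 0 :=
  ((integral_eq_zero_iff_of_nonneg (fun ω ↦ sq_nonneg (X ω)) hsq).1 h).mono fun _ hω ↦
    pow_eq_zero_iff two_ne_zero |>.1 hω

lemma one_le_mgf_of_integral_eq_zero [IsProbabilityMeasure μ] (hint : Integrable X μ)
    (hmean : ∫ ω, X ω ∂μ = 0) {θ : ℝ} (hexp : Integrable (fun ω ↦ exp (θ * X ω)) μ) :
    1 ≤ mgf X μ θ :=
  calc 1 = ∫ ω, (1 + θ * X ω) ∂μ := by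
        rw [integral_add (integrable_const 1) (hint.const_mul θ), integral_const_mul, hmean]
        simp
  _ ≤ mgf X μ θ :=
        integral_mono ((integrable_const 1).add (hint.const_mul θ)) hexp fun ω ↦ by
          linarith [add_one_le_exp (θ * X ω)]

lemma mgf_le_exp_of_abs_le [IsProbabilityMeasure μ] (hint : Integrable X μ)
    (hmean : ∫ ω, X ω ∂μ = 0) (hbdd : ∀ᵐ ω ∂μ, |X ω| ≤ M) {θ : ℝ} (hθ : 0 ≤ θ)
    (hθM : θ * M < 3) :
    mgf X μ θ ≤ exp (θ ^ 2 * (∫ ω, X ω ^ 2 ∂μ) / (2 * (1 - θ * M / 3))) := by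
  have hM : 0 ≤ M := by
    obtain ⟨ω, hω⟩ := hbdd.exists
    exact (abs_nonneg _).trans hω
  set c := θ ^ 2 / (2 * (1 - θ * M / 3))
  have hsq := integrable_sq_of_abs_le hint.aestronglyMeasurable hbdd
  have hlin : Integrable (fun ω ↦ 1 + θ * X ω) μ := (integrable_const 1).add (hint.const_mul θ)
  have hpointwise : ∀ᵐ ω ∂μ, exp (θ * X ω) ≤ 1 + θ * X ω + c * X ω ^ 2 := by
    filter_upwards [hbdd] with ω hω
    have hub : θ * X ω ≤ θ * M := by gcongr; exact (le_abs_self _).trans hω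
    convert exp_le_one_add_add_sq_div_of_le (by positivity) hθM hub using 1
    ring
  calc mgf X μ θ ≤ ∫ ω, (1 + θ * X ω + c * X ω ^ 2) ∂μ :=
        integral_mono_ae (integrable_exp_mul_of_abs_le hint.aestronglyMeasurable hbdd θ)
          (hlin.add (hsq.const_mul c)) hpointwise
  _ = 1 + c * ∫ ω, X ω ^ 2 ∂μ := by
        rw [integral_add hlin (hsq.const_mul c), integral_add (integrable_const 1)
          (hint.const_mul θ), integral_const_mul, integral_const_mul, hmean]
        simp
  _ ≤ exp (θ ^ 2 * (∫ ω, X ω ^ 2 ∂μ) / (2 * (1 - θ * M / 3))) := by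
        rw [mul_div_right_comm]
        linarith [add_one_le_exp (c * ∫ ω, X ω ^ 2 ∂μ)]

end BoundedVariable

lemma ProbabilityTheory.iIndepFun.mgf_sum_le_exp_of_abs_le {Ω ι : Type*} {mΩ : MeasurableSpace Ω}
    {μ : Measure Ω} [IsProbabilityMeasure μ] [Fintype ι] {X : ι → Ω → ℝ} {M θ : ℝ}
    (hindep : iIndepFun X μ) (hint : ∀ i, Integrable (X i) μ) (hmean : ∀ i, ∫ ω, X i ω ∂μ = 0)
    (hbdd : ∀ i, ∀ᵐ ω ∂μ, |X i ω| ≤ M) (hθ : 0 ≤ θ) (hθM : θ * M < 3) :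
    mgf (∑ i, X i) μ θ ≤ exp (θ ^ 2 * (∑ i, ∫ ω, X i ω ^ 2 ∂μ) / (2 * (1 - θ * M / 3))) := by
  rw [hindep.mgf_sum₀ fun i ↦ (hint i).aemeasurable, Finset.mul_sum, Finset.sum_div, exp_sum]
  exact Finset.prod_le_prod (fun i _ ↦ mgf_nonneg) fun i _ ↦
    mgf_le_exp_of_abs_le (hint i) (hmean i) (hbdd i) hθ hθM

lemma MeasureTheory.Submartingale.mul_measureReal_exists_ge_le {Ω : Type*}
    {mΩ : MeasurableSpace Ω} {μ : Measure Ω} [IsFiniteMeasure μ] {f : ℕ → Ω → ℝ}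
    {ℱ : Filtration ℕ mΩ}
    (hsub : Submartingale f ℱ μ) (hnonneg : 0 ≤ f) {ε : ℝ} (hε : 0 ≤ ε) (n : ℕ) :
    ε * μ.real {ω | ∃ k ≤ n, ε ≤ f k ω} ≤ ∫ ω, f n ω ∂μ := by
  set A := {ω | ∃ k ≤ n, ε ≤ f k ω}
  have hdoob : ENNReal.ofReal ε * μ A ≤ ENNReal.ofReal (∫ ω in A, f n ω ∂μ) := by
    have hA : A = {ω | (ε.toNNReal : ℝ) ≤
        (range (n + 1)).sup' nonempty_range_add_one fun k ↦ f k ω} := by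
      ext ω
      simp [A, Finset.le_sup'_iff, Real.coe_toNNReal _ hε]
    rw [hA]
    exact maximal_ineq hsub hnonneg n
  calc ε * μ.real A = (ENNReal.ofReal ε * μ A).toReal := by
        rw [ENNReal.toReal_mul, ENNReal.toReal_ofReal hε, measureReal_def]
  _ ≤ ∫ ω in A, f n ω ∂μ := by
        rw [← ENNReal.toReal_ofReal (integral_nonneg fun ω ↦ hnonneg n ω)]
        exact ENNReal.toReal_mono ENNReal.ofReal_ne_top hdoob
  _ ≤ ∫ ω, f n ω ∂μ := setIntegral_le_integral (hsub.integrable n) (.of_forall (hnonneg n))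

section PartialSums

variable {Ω : Type*} {mΩ : MeasurableSpace Ω} {μ : Measure Ω} {L : ℕ} {X : Fin L → Ω → ℝ}

def partialSum (X : Fin L → Ω → ℝ) (ℓ : ℕ) (ω : Ω) : ℝ :=
  ∑ i ∈ univ.filter (fun i : Fin L ↦ (i : ℕ) < ℓ), X i ω

lemma partialSum_of_le {ℓ : ℕ} (hℓ : L ≤ ℓ) : partialSum X ℓ = ∑ i, X i := by
  ext ω
  rw [partialSum, Finset.filter_true_of_mem fun i _ ↦ i.isLt.trans_le hℓ, Finset.sum_apply]

lemma measure_exists_partialSum_ge_eq_zero (hsq : ∀ i, Integrable (fun ω ↦ X i ω ^ 2) μ)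
    (hσ : ∑ i, ∫ ω, X i ω ^ 2 ∂μ = 0) {t : ℝ} (ht : 0 < t) :
    μ {ω | ∃ ℓ, t ≤ partialSum X ℓ ω} = 0 := by
  have hzero : ∀ᵐ ω ∂μ, ∀ i, X i ω = 0 := ae_all_iff.2 fun i ↦
    ae_eq_zero_of_integral_sq_eq_zero (hsq i) <|
      (sum_eq_zero_iff_of_nonneg fun i _ ↦ integral_nonneg fun ω ↦ sq_nonneg (X i ω)).1 hσ i
        (mem_univ i)
  refine measure_mono_null ?_ (ae_iff.1 hzero)
  rintro ω ⟨ℓ, hℓ⟩ hω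
  exact ht.not_ge (by simpa [partialSum, hω] using hℓ)

def prefixFiltration (X : Fin L → Ω → ℝ) (hmeas : ∀ i, Measurable (X i)) :
    Filtration ℕ mΩ where
  seq ℓ := ⨆ i ∈ {i : Fin L | (i : ℕ) < ℓ}, MeasurableSpace.comap (X i) inferInstance
  mono' _ _ h := biSup_mono fun _ hi ↦ lt_of_lt_of_le hi h
  le' _ := iSup₂_le fun i _ ↦ (hmeas i).comap_le

variable (hmeas : ∀ i, Measurable (X i))

lemma measurable_partialSum_prefixFiltration (ℓ : ℕ) :
    Measurable[prefixFiltration X hmeas ℓ] (partialSum X ℓ) :=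
  Finset.measurable_sum _ fun i hi ↦ Measurable.of_comap_le
    (le_biSup (fun i ↦ MeasurableSpace.comap (X i) inferInstance) (by simpa using hi))

variable [IsProbabilityMeasure μ] (hindep : iIndepFun X μ) {θ : ℝ}
  (hexp : ∀ i, Integrable (fun ω ↦ exp (θ * X i ω)) μ)
include hmeas hindep hexp

lemma integrable_exp_mul_sum (I : Finset (Fin L)) :
    Integrable (fun ω ↦ exp (θ * ∑ i ∈ I, X i ω)) μ := by
  simpa [Finset.sum_apply] using hindep.integrable_exp_mul_sum hmeas fun i _ ↦ hexp i

/-- The increment `S ℓ' - S ℓ` is independent of `prefixFiltration X hmeas ℓ` and has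
exponential moment at least `1`. -/
lemma setIntegral_exp_mul_partialSum_mono (hint : ∀ i, Integrable (X i) μ)
    (hmean : ∀ i, ∫ ω, X i ω ∂μ = 0) {ℓ ℓ' : ℕ} (hℓ : ℓ ≤ ℓ') {s : Set Ω}
    (hs : MeasurableSet[prefixFiltration X hmeas ℓ] s) :
    ∫ ω in s, exp (θ * partialSum X ℓ ω) ∂μ ≤ ∫ ω in s, exp (θ * partialSum X ℓ' ω) ∂μ := by
  set I := (univ.filter fun i : Fin L ↦ (i : ℕ) < ℓ').filter fun i : Fin L ↦ ¬(i : ℕ) < ℓ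
  set D := fun ω ↦ ∑ i ∈ I, X i ω
  set g := s.indicator fun ω ↦ exp (θ * partialSum X ℓ ω)
  have hs' : MeasurableSet s := (prefixFiltration X hmeas).le ℓ s hs
  have hsplit (ω : Ω) : partialSum X ℓ' ω = partialSum X ℓ ω + D ω := by
    rw [partialSum, ← sum_filter_add_sum_filter_not _ fun i : Fin L ↦ (i : ℕ) < ℓ, filter_filter,
      partialSum]
    congr 2
    ext i
    simp only [mem_filter, mem_univ, true_and]
    omega
  have htail : Indep (prefixFiltration X hmeas ℓ)
      (⨆ i ∈ {i : Fin L | ¬(i : ℕ) < ℓ}, MeasurableSpace.comap (X i) inferInstance) μ :=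
    indep_iSup_of_disjoint (fun i ↦ (hmeas i).comap_le) hindep
      (Set.disjoint_left.2 fun _ hi hi' ↦ hi' hi)
  have hg : Measurable[prefixFiltration X hmeas ℓ] g :=
    (measurable_exp.comp
      ((measurable_partialSum_prefixFiltration hmeas ℓ).const_mul θ)).indicator hs
  have hD : Measurable[⨆ i ∈ {i : Fin L | ¬(i : ℕ) < ℓ}, MeasurableSpace.comap (X i) inferInstance]
      D :=
    Finset.measurable_sum _ fun i hi ↦ Measurable.of_comap_le
      (le_biSup (fun i ↦ MeasurableSpace.comap (X i) inferInstance) (mem_filter.1 hi).2)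
  have hindep_gD : IndepFun g (fun ω ↦ exp (θ * D ω)) μ :=
    (IndepFun_iff_Indep _ _ _).2 <| indep_of_indep_of_le_left (indep_of_indep_of_le_right htail
      (measurable_exp.comp (hD.const_mul θ)).comap_le) hg.comap_le
  have hmgf : 1 ≤ mgf D μ θ :=
    one_le_mgf_of_integral_eq_zero (integrable_finsetSum _ fun i _ ↦ hint i)
      (by rw [integral_finsetSum _ fun i _ ↦ hint i]; exact sum_eq_zero fun i _ ↦ hmean i)
      (integrable_exp_mul_sum hmeas hindep hexp I)
  calc ∫ ω in s, exp (θ * partialSum X ℓ ω) ∂μ = ∫ ω, g ω ∂μ := (integral_indicator hs').symm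
  _ ≤ (∫ ω, g ω ∂μ) * mgf D μ θ :=
        le_mul_of_one_le_right
          (integral_nonneg fun ω ↦ Set.indicator_nonneg (fun _ _ ↦ (exp_pos _).le) ω) hmgf
  _ = ∫ ω, g ω * exp (θ * D ω) ∂μ :=
        (hindep_gD.integral_mul_eq_mul_integral
          (hg.mono ((prefixFiltration X hmeas).le ℓ) le_rfl).aestronglyMeasurable
          (integrable_exp_mul_sum hmeas hindep hexp I).aestronglyMeasurable).symm
  _ = ∫ ω in s, exp (θ * partialSum X ℓ' ω) ∂μ := by
        rw [← integral_indicator hs']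
        congr 1
        ext ω
        by_cases hω : ω ∈ s <;> simp [g, hω, hsplit, mul_add, exp_add]

lemma submartingale_exp_mul_partialSum (hint : ∀ i, Integrable (X i) μ)
    (hmean : ∀ i, ∫ ω, X i ω ∂μ = 0) :
    Submartingale (fun ℓ ω ↦ exp (θ * partialSum X ℓ ω)) (prefixFiltration X hmeas) μ :=
  submartingale_of_setIntegral_le
    (fun ℓ ↦ (measurable_exp.comp
      ((measurable_partialSum_prefixFiltration hmeas ℓ).const_mul θ)).stronglyMeasurable)
    (fun _ ↦ integrable_exp_mul_sum hmeas hindep hexp _)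
    fun _ _ hℓ _ hs ↦ setIntegral_exp_mul_partialSum_mono hmeas hindep hexp hint hmean hℓ hs

lemma measureReal_exists_partialSum_ge_le (hint : ∀ i, Integrable (X i) μ)
    (hmean : ∀ i, ∫ ω, X i ω ∂μ = 0) (hθ : 0 ≤ θ) (t : ℝ) :
    μ.real {ω | ∃ ℓ ≤ L, t ≤ partialSum X ℓ ω} ≤ exp (-(θ * t)) * mgf (∑ i, X i) μ θ := by
  have hdoob := (submartingale_exp_mul_partialSum hmeas hindep hexp hint hmean
    ).mul_measureReal_exists_ge_le (fun _ _ ↦ (exp_pos _).le) (exp_pos (θ * t)).le L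
  rw [← partialSum_of_le le_rfl, exp_neg, ← div_eq_inv_mul, le_div_iff₀' (exp_pos _)]
  refine le_trans (mul_le_mul_of_nonneg_left (measureReal_mono ?_) (exp_pos _).le) hdoob
  rintro ω ⟨ℓ, hℓL, hℓ⟩
  exact ⟨ℓ, hℓL, exp_le_exp.2 (mul_le_mul_of_nonneg_left hℓ hθ)⟩

end PartialSums

lemma measureReal_exists_partialSum_ge_le_exp {Ω : Type*} {mΩ : MeasurableSpace Ω}
    {μ : Measure Ω} [IsProbabilityMeasure μ] {L : ℕ} {X : Fin L → Ω → ℝ} {M θ : ℝ}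
    (hmeas : ∀ i, Measurable (X i)) (hindep : iIndepFun X μ) (hint : ∀ i, Integrable (X i) μ)
    (hmean : ∀ i, ∫ ω, X i ω ∂μ = 0) (hbdd : ∀ i, ∀ᵐ ω ∂μ, |X i ω| ≤ M) (hθ : 0 ≤ θ)
    (hθM : θ * M < 3) (t : ℝ) :
    μ.real {ω | ∃ ℓ ≤ L, t ≤ partialSum X ℓ ω}
      ≤ exp (-(θ * t) + θ ^ 2 * (∑ i, ∫ ω, X i ω ^ 2 ∂μ) / (2 * (1 - θ * M / 3))) :=
  calc μ.real {ω | ∃ ℓ ≤ L, t ≤ partialSum X ℓ ω} ≤ exp (-(θ * t)) * mgf (∑ i, X i) μ θ :=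
        measureReal_exists_partialSum_ge_le hmeas hindep
          (fun i ↦ integrable_exp_mul_of_abs_le (hint i).1 (hbdd i) θ) hint hmean hθ t
  _ ≤ exp (-(θ * t)) * exp (θ ^ 2 * (∑ i, ∫ ω, X i ω ^ 2 ∂μ) / (2 * (1 - θ * M / 3))) := by
        gcongr
        exact hindep.mgf_sum_le_exp_of_abs_le hint hmean hbdd hθ hθM
  _ = _ := (exp_add _ _).symm

/-- One-sided maximal Bernstein/Hoeffding-type inequality (proved in the appendix of
the paper): if `X_1, ..., X_L` are independent mean-zero random variables with
`|X_i| ≤ M`, and `S_ℓ = X_1 + ⋯ + X_ℓ`, then for every `t > 0`,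
`P[max_{1 ≤ ℓ ≤ L} S_ℓ ≥ t] ≤ exp(-(t²/2)/(∑ E[X_i²] + Mt/3))`. -/
theorem maximal_bernstein_one_sided
    {Ω : Type*} [MeasurableSpace Ω] (μ : Measure Ω) [IsProbabilityMeasure μ]
    (L : ℕ) (X : Fin L → Ω → ℝ) (M : ℝ)
    (hmeas : ∀ i, Measurable (X i))
    (hindep : iIndepFun X μ)
    (hint : ∀ i, Integrable (X i) μ)
    (hmean : ∀ i, ∫ ω, X i ω ∂μ = 0)
    (hbdd : ∀ i, ∀ᵐ ω ∂μ, |X i ω| ≤ M)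
    (t : ℝ) (ht : 0 < t) :
    μ {ω | ∃ ℓ : ℕ, 1 ≤ ℓ ∧ ℓ ≤ L ∧
        t ≤ ∑ i ∈ Finset.univ.filter (fun i : Fin L => (i : ℕ) < ℓ), X i ω}
      ≤ ENNReal.ofReal (Real.exp
          (-(t ^ 2 / 2) / ((∑ i, ∫ ω, (X i ω) ^ 2 ∂μ) + M * t / 3))) := by
  set σ2 := ∑ i, ∫ ω, X i ω ^ 2 ∂μ
  have hσ2 : 0 ≤ σ2 := sum_nonneg fun i _ ↦ integral_nonneg fun ω ↦ sq_nonneg (X i ω)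
  rcases hσ2.eq_or_lt with hσ2 | hσ2
  · refine (measure_mono_null ?_ (measure_exists_partialSum_ge_eq_zero
      (fun i ↦ integrable_sq_of_abs_le (hint i).1 (hbdd i)) hσ2.symm ht)).trans_le zero_le
    rintro ω ⟨ℓ, -, -, hℓ⟩
    exact ⟨ℓ, hℓ⟩
  obtain ⟨i₀⟩ : Nonempty (Fin L) := by
    by_contra hL
    simp [σ2, not_nonempty_iff.1 hL] at hσ2
  have hM : 0 ≤ M := (abs_nonneg _).trans (hbdd i₀).exists.choose_spec
  set V := σ2 + M * t / 3
  have hV : 0 < V := by positivity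
  set θ := t / V
  have hθM : 1 - θ * M / 3 = σ2 / V := by simp only [θ, V]; field_simp; ring
  rw [ENNReal.le_ofReal_iff_toReal_le (measure_ne_top _ _) (exp_pos _).le]
  calc μ.real _ ≤ μ.real {ω | ∃ ℓ ≤ L, t ≤ partialSum X ℓ ω} :=
        measureReal_mono (by rintro ω ⟨ℓ, -, hℓL, hℓ⟩; exact ⟨ℓ, hℓL, hℓ⟩)
  _ ≤ exp (-(θ * t) + θ ^ 2 * σ2 / (2 * (1 - θ * M / 3))) :=
        measureReal_exists_partialSum_ge_le_exp hmeas hindep hint hmean hbdd (by positivity)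
          (by nlinarith [div_pos hσ2 hV]) t
  _ = exp (-(t ^ 2 / 2) / V) := by
        rw [hθM]
        congr 1
        simp only [θ]
        field_simp
        ring
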